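/- Let G be a graph and k ≥ 1. An edge set F is an inclusionwise minimal union of k 2-star-packings covering all vertices if and only if F is an inclusionwise minimal matching-2k-cover. -/

import Mathlib

/-- `M` is a matching of `G`: a set of edges of `G` that are pairwise vertex-disjoint. -/
def IsMatching {V : Type*} (G : SimpleGraph V) (M : Finset (Sym2 V)) : Prop :=
  ↑M ⊆ G.edgeSet ∧ (M : Set (Sym2 V)).Pairwise fun e f => ∀ v : V, ¬(v ∈ e ∧ v ∈ f)

/-- A vertex `v` is covered by an edge set `F` if some edge of `F` is incident to it. -/
def Covers {V : Type*} (F : Finset (Sym2 V)) (v : V) : Prop := ∃ e ∈ F, v ∈ e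

instance {V : Type*} [DecidableEq V] (F : Finset (Sym2 V)) (v : V) : Decidable (Covers F v) :=
  inferInstanceAs (Decidable (∃ e ∈ F, v ∈ e))

/-- A stable (independent) set of vertices. -/
def IsStable {V : Type*} (G : SimpleGraph V) (S : Finset V) : Prop :=
  ∀ u ∈ S, ∀ v ∈ S, ¬ G.Adj u v

/-- The external neighborhood `N(S)`. -/
def nbr {V : Type*} [Fintype V] [DecidableEq V] (G : SimpleGraph V) [DecidableRel G.Adj]
    (S : Finset V) : Finset V :=
  Finset.univ.filter fun w => w ∉ S ∧ ∃ u ∈ S, G.Adj u w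

/-- degree of a vertex in an edge set -/
def degF {V : Type*} [DecidableEq V] (F : Finset (Sym2 V)) (v : V) : ℕ :=
  (F.filter fun e => v ∈ e).card

/-- `F` is a 2-star-packing: each component is a star with 1 or 2 edges.
Equivalently all degrees are at most 2 and no edge joins two vertices of degree 2. -/
def Is2StarPacking {V : Type*} [DecidableEq V] (G : SimpleGraph V) (F : Finset (Sym2 V)) : Prop :=
  ↑F ⊆ G.edgeSet ∧ (∀ v : V, degF F v ≤ 2) ∧
    ∀ e ∈ F, ∀ u v : V, e = s(u, v) → degF F u = 1 ∨ degF F v = 1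
/-- `F` is a matching-`k`-cover: the union of `k` matchings of `G` covering every vertex. -/
def IsMatchingKCover {V : Type*} [DecidableEq V] (G : SimpleGraph V)
    (F : Finset (Sym2 V)) (k : ℕ) : Prop :=
  (∃ M : Fin k → Finset (Sym2 V), (∀ i, IsMatching G (M i)) ∧ F = Finset.univ.sup M) ∧
    ∀ v : V, Covers F v

/-- `F` is the union of `k` 2-star-packings of `G` covering every vertex. -/
def IsUnionOfK2StarPackingsCovering {V : Type*} [DecidableEq V] (G : SimpleGraph V)
    (F : Finset (Sym2 V)) (k : ℕ) : Prop :=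
  (∃ H : Fin k → Finset (Sym2 V), (∀ i, Is2StarPacking G (H i)) ∧ F = Finset.univ.sup H) ∧
    ∀ v : V, Covers F v

/-!
Both kinds of minimal edge sets are exactly the spanning star forests of maximum degree at most
`2k`. Minimality forces every edge to have an endpoint of degree one, since otherwise the edge could
be removed from every part without uncovering a vertex; and in a star forest every edge is the only
one covering its leaf, so no proper subset covers. Conversely, numbering the edges at the centre of
each star by `0, …, 2k - 1` is a proper edge colouring; its colour classes are `2k` matchings, and
merging the classes `2i` and `2i + 1` gives `k` 2-star-packings.
-/

section

variable {V : Type*} [DecidableEq V] {F F' : Finset (Sym2 V)} {e f : Sym2 V} {v : V}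

lemma degF_mono (h : F' ⊆ F) (v : V) : degF F' v ≤ degF F v :=
  Finset.card_le_card (Finset.filter_subset_filter _ h)

lemma degF_pos (he : e ∈ F) (hv : v ∈ e) : 0 < degF F v :=
  Finset.card_pos.mpr ⟨e, Finset.mem_filter.mpr ⟨he, hv⟩⟩

lemma eq_of_degF_eq_one (he : e ∈ F) (hve : v ∈ e) (hf : f ∈ F) (hvf : v ∈ f)
    (h : degF F v = 1) : e = f :=
  Finset.card_le_one.mp h.le e (Finset.mem_filter.mpr ⟨he, hve⟩) f
    (Finset.mem_filter.mpr ⟨hf, hvf⟩)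

lemma degF_eq_one_of_subset (hF' : F' ⊆ F) (he : e ∈ F') (hv : v ∈ e) (h : degF F v = 1) :
    degF F' v = 1 :=
  le_antisymm (h ▸ degF_mono hF' v) (degF_pos he hv)

lemma degF_sup_le {ι : Type*} (s : Finset ι) (H : ι → Finset (Sym2 V)) (v : V) :
    degF (s.sup H) v ≤ ∑ i ∈ s, degF (H i) v := by
  rw [degF, Finset.sup_eq_biUnion, Finset.filter_biUnion]
  exact Finset.card_biUnion_le

lemma coe_sup_subset_edgeSet {ι : Type*} {G : SimpleGraph V} (s : Finset ι)
    {H : ι → Finset (Sym2 V)} (hH : ∀ i, ↑(H i) ⊆ G.edgeSet) : ↑(s.sup H) ⊆ G.edgeSet := by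
  intro e he
  obtain ⟨i, -, hei⟩ := Finset.mem_sup.mp he
  exact hH i hei

lemma IsMatching.degF_le_one {G : SimpleGraph V} {M : Finset (Sym2 V)} (hM : IsMatching G M)
    (v : V) : degF M v ≤ 1 := by
  refine Finset.card_le_one.mpr fun e he f hf => ?_
  rw [Finset.mem_filter] at he hf
  by_contra hne
  exact hM.2 he.1 hf.1 hne v ⟨he.2, hf.2⟩

lemma IsMatching.erase {G : SimpleGraph V} {M : Finset (Sym2 V)} (hM : IsMatching G M)
    (e : Sym2 V) : IsMatching G (M.erase e) :=
  ⟨(Finset.coe_subset.mpr (M.erase_subset e)).trans hM.1,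
    hM.2.mono (Finset.coe_subset.mpr (M.erase_subset e))⟩

lemma exists_sup_erase {ι : Type*} [Fintype ι] {P : Finset (Sym2 V) → Prop}
    (hP : ∀ S e, P S → P (S.erase e)) (F : Finset (Sym2 V)) (e : Sym2 V) :
    (∃ H : ι → Finset (Sym2 V), (∀ i, P (H i)) ∧ F = Finset.univ.sup H) →
      ∃ H : ι → Finset (Sym2 V), (∀ i, P (H i)) ∧ F.erase e = Finset.univ.sup H := by
  rintro ⟨H, hH, rfl⟩
  refine ⟨fun i => (H i).erase e, fun i => hP _ e (hH i), ?_⟩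
  simp only [← Finset.sdiff_singleton_eq_erase, Finset.sup_sdiff_right]

lemma univ_sup_filter_eq {ι α : Type*} [Fintype ι] [DecidableEq α] (s : Finset α)
    (p : ι → α → Prop) [∀ i, DecidablePred (p i)] (hp : ∀ a ∈ s, ∃ i, p i a) :
    Finset.univ.sup (fun i => s.filter (p i)) = s := by
  ext a
  simp only [Finset.mem_sup, Finset.mem_filter, Finset.mem_univ, true_and]
  exact ⟨fun ⟨_, ha, _⟩ => ha, fun ha => (hp a ha).imp fun _ => And.intro ha⟩

lemma Finset.exists_injOn_lt_card {α : Type*} [DecidableEq α] (s : Finset α) :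
    ∃ idx : α → ℕ, (∀ a ∈ s, idx a < s.card) ∧ Set.InjOn idx s :=
  ⟨fun a => s.toList.idxOf a,
    fun _ ha => s.length_toList ▸ List.idxOf_lt_length_iff.mpr (s.mem_toList.mpr ha),
    fun _ ha _ _ h => (List.idxOf_inj (s.mem_toList.mpr ha)).mp h⟩

-- Every edge has an endpoint of degree one; equivalently, every component is a star.
def IsStarForest (F : Finset (Sym2 V)) : Prop :=
  ∀ e ∈ F, ∃ x ∈ e, degF F x = 1

lemma isStarForest_iff :
    IsStarForest F ↔ ∀ e ∈ F, ∀ u v : V, e = s(u, v) → degF F u = 1 ∨ degF F v = 1 := by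
  refine forall₂_congr fun e _ => ⟨?_, ?_⟩
  · rintro ⟨x, hx, hdeg⟩ u v rfl
    rcases Sym2.mem_iff.mp hx with rfl | rfl
    exacts [Or.inl hdeg, Or.inr hdeg]
  · induction e using Sym2.ind with
    | h u v =>
      intro h
      rcases h u v rfl with hu | hv
      exacts [⟨u, Sym2.mem_mk_left u v, hu⟩, ⟨v, Sym2.mem_mk_right u v, hv⟩]

lemma is2StarPacking_iff {G : SimpleGraph V} :
    Is2StarPacking G F ↔ ↑F ⊆ G.edgeSet ∧ (∀ v, degF F v ≤ 2) ∧ IsStarForest F := by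
  rw [isStarForest_iff, Is2StarPacking]

lemma IsStarForest.mono (hF : IsStarForest F) (hF' : F' ⊆ F) : IsStarForest F' := fun e he =>
  (hF e (hF' he)).imp fun _ ⟨hx, h⟩ => ⟨hx, degF_eq_one_of_subset hF' he hx h⟩

lemma Is2StarPacking.mono {G : SimpleGraph V} (hF : Is2StarPacking G F) (hF' : F' ⊆ F) :
    Is2StarPacking G F' := by
  obtain ⟨hG, hdeg, hstar⟩ := is2StarPacking_iff.mp hF
  exact is2StarPacking_iff.mpr ⟨(Finset.coe_subset.mpr hF').trans hG,
    fun v => (degF_mono hF' v).trans (hdeg v), hstar.mono hF'⟩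

lemma IsStarForest.not_forall_covers_of_ssubset (hF : IsStarForest F) (hF' : F' ⊂ F) :
    ¬ ∀ v, Covers F' v := by
  obtain ⟨e, he, he'⟩ := Finset.exists_of_ssubset hF'
  obtain ⟨x, hx, hdeg⟩ := hF e he
  intro hcov
  obtain ⟨f, hf, hxf⟩ := hcov x
  exact he' (eq_of_degF_eq_one (hF'.1 hf) hxf he hx hdeg ▸ hf)

-- The centre of the star containing `e` is the endpoint opposite a leaf; the statement covers
-- every `e` so that `choose` gives a total centre function.
lemma IsStarForest.exists_center (hF : IsStarForest F) (e : Sym2 V) :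
    ∃ w, e ∈ F → w ∈ e ∧ ∀ f ∈ F, f ≠ e → ∀ x ∈ e, x ∈ f → x = w := by
  by_cases he : e ∈ F
  · obtain ⟨u, hu, hdeg⟩ := hF e he
    refine ⟨Sym2.Mem.other hu, fun _ => ⟨Sym2.other_mem hu, fun f hf hfe x hx hxf => ?_⟩⟩
    rcases Sym2.mem_iff.mp (Sym2.other_spec hu ▸ hx) with rfl | rfl
    · exact absurd (eq_of_degF_eq_one hf hxf he hu hdeg) hfe
    · rfl
  · exact ⟨e.out.1, fun h => absurd h he⟩

lemma IsStarForest.exists_edgeColoring (hF : IsStarForest F) {d : ℕ}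
    (hdeg : ∀ v, degF F v ≤ d) :
    ∃ c : Sym2 V → ℕ, (∀ e ∈ F, c e < d) ∧
      ∀ e ∈ F, ∀ f ∈ F, ∀ v ∈ e, v ∈ f → c e = c f → e = f := by
  choose ctr hctr using hF.exists_center
  choose idx hidx_lt hidx_inj using fun v => (F.filter (v ∈ ·)).exists_injOn_lt_card
  refine ⟨fun e => idx (ctr e) e, fun e he => (hidx_lt _ e ?_).trans_le (hdeg _), ?_⟩
  · exact Finset.mem_filter.mpr ⟨he, (hctr e he).1⟩
  intro e he f hf v hve hvf hc
  by_contra hne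
  have hv : ctr e = v := ((hctr e he).2 f hf (Ne.symm hne) v hve hvf).symm
  have hv' : ctr f = v := ((hctr f hf).2 e he hne v hvf hve).symm
  dsimp only at hc
  rw [hv, hv'] at hc
  exact hne (hidx_inj v (Finset.mem_filter.mpr ⟨he, hve⟩) (Finset.mem_filter.mpr ⟨hf, hvf⟩) hc)

lemma covers_erase (hw : Covers F v) (he : ∀ x ∈ e, degF F x ≠ 1) : Covers (F.erase e) v := by
  obtain ⟨f, hf, hvf⟩ := hw
  by_cases hfe : f = e
  · subst hfe
    have h2 : 1 < degF F v := by have := degF_pos hf hvf; have := he v hvf; omega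
    obtain ⟨g, hg, hge⟩ := Finset.exists_mem_ne h2 f
    rw [Finset.mem_filter] at hg
    exact ⟨g, Finset.mem_erase.mpr ⟨hge, hg.1⟩, hg.2⟩
  · exact ⟨f, Finset.mem_erase.mpr ⟨hfe, hf⟩, hvf⟩

lemma isStarForest_of_minimal {P : Finset (Sym2 V) → Prop} (hP : ∀ S e, P S → P (S.erase e))
    (hF : P F) (hcov : ∀ v, Covers F v) (hmin : ∀ F' ⊂ F, ¬ (P F' ∧ ∀ v, Covers F' v)) :
    IsStarForest F := by
  intro e he
  by_contra! hleaf
  exact hmin _ (Finset.erase_ssubset he) ⟨hP F e hF, fun v => covers_erase (hcov v) hleaf⟩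

structure IsStarForestCover (G : SimpleGraph V) (F : Finset (Sym2 V)) (d : ℕ) : Prop where
  subset_edgeSet : ↑F ⊆ G.edgeSet
  covers : ∀ v, Covers F v
  degF_le : ∀ v, degF F v ≤ d
  isStarForest : IsStarForest F

variable {G : SimpleGraph V}

lemma IsStarForestCover.isMatchingKCover {d : ℕ} (hF : IsStarForestCover G F d) :
    IsMatchingKCover G F d := by
  obtain ⟨c, hc_lt, hc⟩ := hF.isStarForest.exists_edgeColoring hF.degF_le
  refine ⟨⟨fun i : Fin d => F.filter (c · = i), fun i => ⟨?_, ?_⟩, ?_⟩, hF.covers⟩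
  · exact (Finset.coe_subset.mpr (F.filter_subset _)).trans hF.subset_edgeSet
  · intro e he f hf hne v ⟨hve, hvf⟩
    rw [Finset.mem_coe, Finset.mem_filter] at he hf
    exact hne (hc e he.1 f hf.1 v hve hvf (he.2.trans hf.2.symm))
  · exact (univ_sup_filter_eq F (fun i : Fin d => (c · = i)) fun e he =>
      ⟨⟨c e, hc_lt e he⟩, rfl⟩).symm

lemma IsStarForestCover.isUnionOfK2StarPackingsCovering {k : ℕ}
    (hF : IsStarForestCover G F (2 * k)) : IsUnionOfK2StarPackingsCovering G F k := by
  obtain ⟨c, hc_lt, hc⟩ := hF.isStarForest.exists_edgeColoring hF.degF_le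
  refine ⟨⟨fun i : Fin k => F.filter (c · / 2 = i), fun i => is2StarPacking_iff.mpr ⟨?_, ?_, ?_⟩,
    ?_⟩, hF.covers⟩
  · exact (Finset.coe_subset.mpr (F.filter_subset _)).trans hF.subset_edgeSet
  · intro v
    calc degF (F.filter (c · / 2 = i)) v ≤ ({2 * i.val, 2 * i.val + 1} : Finset ℕ).card := by
          refine Finset.card_le_card_of_injOn c (fun e he => ?_) (fun e he f hf hef => ?_)
          · rw [Finset.mem_coe, Finset.mem_filter, Finset.mem_filter] at he
            simp only [Finset.coe_insert, Finset.coe_singleton, Set.mem_insert_iff,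
              Set.mem_singleton_iff]
            omega
          · rw [Finset.mem_coe, Finset.mem_filter, Finset.mem_filter] at he hf
            exact hc e he.1.1 f hf.1.1 v he.2 hf.2 hef
      _ ≤ 2 := Finset.card_le_two
  · exact hF.isStarForest.mono (F.filter_subset _)
  · exact (univ_sup_filter_eq F (fun i : Fin k => (c · / 2 = i)) fun e he =>
      ⟨⟨c e / 2, by have := hc_lt e he; omega⟩, rfl⟩).symm

lemma isStarForestCover_of_minimal_matchingKCover {d : ℕ} (hF : IsMatchingKCover G F d)
    (hmin : ∀ F' ⊂ F, ¬ IsMatchingKCover G F' d) : IsStarForestCover G F d := by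
  obtain ⟨⟨M, hM, rfl⟩, hcov⟩ := hF
  refine ⟨coe_sup_subset_edgeSet _ fun i => (hM i).1, hcov, fun v => ?_,
    isStarForest_of_minimal (exists_sup_erase fun _ e h => h.erase e)
      ⟨M, hM, rfl⟩ hcov hmin⟩
  calc degF (Finset.univ.sup M) v ≤ ∑ i, degF (M i) v := degF_sup_le _ _ v
    _ ≤ ∑ _ : Fin d, 1 := Finset.sum_le_sum fun i _ => (hM i).degF_le_one v
    _ = d := by simp

lemma isStarForestCover_of_minimal_unionOfK2StarPackingsCovering {k : ℕ}
    (hF : IsUnionOfK2StarPackingsCovering G F k)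
    (hmin : ∀ F' ⊂ F, ¬ IsUnionOfK2StarPackingsCovering G F' k) :
    IsStarForestCover G F (2 * k) := by
  obtain ⟨⟨H, hH, rfl⟩, hcov⟩ := hF
  refine ⟨coe_sup_subset_edgeSet _ fun i => (hH i).1, hcov, fun v => ?_,
    isStarForest_of_minimal
      (exists_sup_erase fun S e h => h.mono (S.erase_subset e))
      ⟨H, hH, rfl⟩ hcov hmin⟩
  calc degF (Finset.univ.sup H) v ≤ ∑ i, degF (H i) v := degF_sup_le _ _ v
    _ ≤ ∑ _ : Fin k, 2 := Finset.sum_le_sum fun i _ => (hH i).2.1 v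
    _ = 2 * k := by simp [mul_comm]

lemma minimal_isMatchingKCover_iff {d : ℕ} :
    (IsMatchingKCover G F d ∧ ∀ F' ⊂ F, ¬ IsMatchingKCover G F' d) ↔
      IsStarForestCover G F d :=
  ⟨fun h => isStarForestCover_of_minimal_matchingKCover h.1 h.2, fun h =>
    ⟨h.isMatchingKCover, fun _ hF' hcov =>
      h.isStarForest.not_forall_covers_of_ssubset hF' hcov.2⟩⟩

lemma minimal_isUnionOfK2StarPackingsCovering_iff {k : ℕ} :
    (IsUnionOfK2StarPackingsCovering G F k ∧
        ∀ F' ⊂ F, ¬ IsUnionOfK2StarPackingsCovering G F' k) ↔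
      IsStarForestCover G F (2 * k) :=
  ⟨fun h => isStarForestCover_of_minimal_unionOfK2StarPackingsCovering h.1 h.2, fun h =>
    ⟨h.isUnionOfK2StarPackingsCovering, fun _ hF' hcov =>
      h.isStarForest.not_forall_covers_of_ssubset hF' hcov.2⟩⟩

end

theorem stmt_15_general {V : Type*} [DecidableEq V] (G : SimpleGraph V)
    (k : ℕ) (F : Finset (Sym2 V)) :
    (IsUnionOfK2StarPackingsCovering G F k ∧
        ∀ F' ⊂ F, ¬ IsUnionOfK2StarPackingsCovering G F' k) ↔
      (IsMatchingKCover G F (2 * k) ∧ ∀ F' ⊂ F, ¬ IsMatchingKCover G F' (2 * k)) := by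
  rw [minimal_isUnionOfK2StarPackingsCovering_iff, minimal_isMatchingKCover_iff]

theorem stmt_15 {V : Type*} [Fintype V] [DecidableEq V] (G : SimpleGraph V)
    (k : ℕ) (hk : 1 ≤ k) (F : Finset (Sym2 V)) :
    (IsUnionOfK2StarPackingsCovering G F k ∧
        ∀ F' ⊂ F, ¬ IsUnionOfK2StarPackingsCovering G F' k) ↔
      (IsMatchingKCover G F (2 * k) ∧ ∀ F' ⊂ F, ¬ IsMatchingKCover G F' (2 * k)) :=
  stmt_15_general G k F
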